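/- arXiv:1307.1185 — 4 statements merged into one kernel-verified Lean document; each statement's English description precedes it below -/
import Mathlib

section
/- Let J be a convex subset of [0,1]^s and let k ∈ ℕ. Partition [0,1)^s into the b^{sk} cubes W = ∏_{j=1}^s [c_j/b^k, (c_j+1)/b^k) with 0 ≤ c_j < b^k. Let W̄_k be the union of those cubes having nonempty intersection with the closure of J, and let W_k^o be the union of those cubes fully contained in J. Then λ(W̄_k \ J) ≤ 2s·√s·b^{-k} and λ(J \ W_k^o) ≤ 2s·√s·b^{-k}. -/
/-!
Work in the sup metric, where a grid cube of side `δ = b⁻ᵏ` has diameter `δ`. Then `W̄ₖ \ J` lies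
in the `δ`-thickening `closure J + closedBall 0 δ` of `closure J`, and `J \ Wₖᵒ` in `J` minus its
erosion `{x | x + closedBall 0 δ ⊆ J}`, up to the null sets `closure J \ J` (part of the frontier
of a convex set) and the faces `{x | x j = 1}`. The sup-ball is the Minkowski sum of the `s` axis
segments `[-δ, δ] • eᵢ`, so thickening or eroding can be done one axis at a time. Each line parallel
to `eᵢ` meets a convex set in an interval, whose thickening or erosion by `δ` costs length at most
`2δ`; by Fubini each step costs volume at most `2δ` inside the unit cube. The total `2sδ` is at most
`2s√s δ`.
-/

open MeasureTheory Set
open scoped ENNReal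

/-- The `b`-adic cube of side length `b^{-k}` indexed by `c`. -/
def bCube (b k : ℕ) {s : ℕ} (c : Fin s → ℕ) : Set (Fin s → ℝ) :=
  Set.univ.pi fun j => Set.Ico ((c j : ℝ) / (b : ℝ) ^ k) (((c j : ℝ) + 1) / (b : ℝ) ^ k)

/-- The unit cube `[0,1]^s`. -/
def unitCube (s : ℕ) : Set (Fin s → ℝ) := Set.univ.pi fun _ => Set.Icc (0 : ℝ) 1

open Metric Function
open scoped Pointwise

def erosion {E : Type*} [Add E] (J B : Set E) : Set E := {x | ∀ c ∈ B, x + c ∈ J}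

section Erosion

variable {E : Type*}

theorem erosion_add [AddSemigroup E] (J B C : Set E) :
    erosion J (B + C) = erosion (erosion J C) B := by
  ext x
  constructor
  · intro h b hb c hc
    simpa only [add_assoc] using h (b + c) (add_mem_add hb hc)
  · rintro h _ ⟨b, hb, c, hc, rfl⟩
    rw [← add_assoc]
    exact h b hb c hc

theorem erosion_subset [AddZeroClass E] {J B : Set E} (h0 : (0 : E) ∈ B) : erosion J B ⊆ J :=
  fun x hx => by simpa using hx 0 h0

theorem erosion_anti [Add E] (J : Set E) {B C : Set E} (h : B ⊆ C) :
    erosion J C ⊆ erosion J B :=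
  fun _ hx c hc => hx c (h hc)

theorem Convex.erosion {𝕜 : Type*} [Semiring 𝕜] [PartialOrder 𝕜] [AddCommMonoid E] [Module 𝕜 E]
    {J : Set E} (hJ : Convex 𝕜 J) (B : Set E) : Convex 𝕜 (erosion J B) := by
  have : _root_.erosion J B = ⋂ c ∈ B, (fun x => x + c) ⁻¹' J := by ext; simp [_root_.erosion]
  rw [this]
  exact convex_iInter₂ fun c _ => hJ.translate_preimage_left c

end Erosion

theorem Set.OrdConnected.exists_Ioo_subset_subset_Icc {I : Set ℝ} (hI : I.OrdConnected)
    (hIb : Bornology.IsBounded I) : ∃ a b, Ioo a b ⊆ I ∧ I ⊆ Icc a b := by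
  rcases I.eq_empty_or_nonempty with rfl | hne
  · exact ⟨0, 0, by simp, empty_subset _⟩
  obtain ⟨hbdd, hbdd'⟩ := isBounded_iff_bddBelow_bddAbove.1 hIb
  exact ⟨sInf I, sSup I, IsConnected.Ioo_csInf_csSup_subset ⟨hne, hI.isPreconnected⟩ hbdd hbdd',
    subset_Icc_csInf_csSup hbdd hbdd'⟩

theorem Real.volume_Icc_diff_Ioo_le (a b c d : ℝ) :
    volume (Icc a b \ Ioo c d) ≤ ENNReal.ofReal (c - a) + ENNReal.ofReal (b - d) := by
  have hsub : Icc a b \ Ioo c d ⊆ Icc a c ∪ Icc d b := by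
    rintro x ⟨⟨hax, hxb⟩, hx⟩
    rcases le_or_gt x c with hxc | hcx
    · exact Or.inl ⟨hax, hxc⟩
    · exact Or.inr ⟨le_of_not_gt fun hxd => hx ⟨hcx, hxd⟩, hxb⟩
  calc volume (Icc a b \ Ioo c d) ≤ volume (Icc a c ∪ Icc d b) := measure_mono hsub
    _ ≤ _ := (measure_union_le _ _).trans_eq (by rw [Real.volume_Icc, Real.volume_Icc])

section Interval

variable {I : Set ℝ} {δ : ℝ}

theorem Set.OrdConnected.volume_add_Icc_diff_le (hI : I.OrdConnected)
    (hIb : Bornology.IsBounded I) (hδ : 0 ≤ δ) :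
    volume ((I + Icc (-δ) δ) \ I) ≤ ENNReal.ofReal (2 * δ) := by
  obtain ⟨a, b, hIoo, hIcc⟩ := hI.exists_Ioo_subset_subset_Icc hIb
  have hsub : I + Icc (-δ) δ ⊆ Icc (a - δ) (b + δ) := by
    rw [sub_eq_add_neg]
    exact (add_subset_add_right hIcc).trans (Icc_add_Icc_subset _ _ _ _)
  calc volume ((I + Icc (-δ) δ) \ I) ≤ volume (Icc (a - δ) (b + δ) \ Ioo a b) :=
        measure_mono (sdiff_subset_sdiff hsub hIoo)
    _ ≤ ENNReal.ofReal (a - (a - δ)) + ENNReal.ofReal (b + δ - b) :=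
        Real.volume_Icc_diff_Ioo_le _ _ _ _
    _ = ENNReal.ofReal (2 * δ) := by
        rw [sub_sub_cancel, add_sub_cancel_left, ← ENNReal.ofReal_add hδ hδ, two_mul]

theorem Set.OrdConnected.volume_diff_erosion_Icc_le (hI : I.OrdConnected)
    (hIb : Bornology.IsBounded I) (hδ : 0 ≤ δ) :
    volume (I \ erosion I (Icc (-δ) δ)) ≤ ENNReal.ofReal (2 * δ) := by
  obtain ⟨a, b, hIoo, hIcc⟩ := hI.exists_Ioo_subset_subset_Icc hIb
  have hsub : Ioo (a + δ) (b - δ) ⊆ erosion I (Icc (-δ) δ) := fun t ht c hc =>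
    hIoo ⟨by linarith [ht.1, hc.1], by linarith [ht.2, hc.2]⟩
  calc volume (I \ erosion I (Icc (-δ) δ)) ≤ volume (Icc a b \ Ioo (a + δ) (b - δ)) :=
        measure_mono (sdiff_subset_sdiff hIcc hsub)
    _ ≤ ENNReal.ofReal (a + δ - a) + ENNReal.ofReal (b - (b - δ)) :=
        Real.volume_Icc_diff_Ioo_le _ _ _ _
    _ = ENNReal.ofReal (2 * δ) := by
        rw [sub_sub_cancel, add_sub_cancel_left, ← ENNReal.ofReal_add hδ hδ, two_mul]

end Interval

theorem mem_unitCube {s : ℕ} {x : Fin s → ℝ} : x ∈ unitCube s ↔ ∀ j, x j ∈ Icc 0 1 := by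
  simp only [unitCube, mem_univ_pi]

theorem isCompact_unitCube (s : ℕ) : IsCompact (unitCube s) :=
  isCompact_univ_pi fun _ => isCompact_Icc

theorem volume_unitCube (s : ℕ) : volume (unitCube s) = 1 := by
  simp only [unitCube, volume_pi_pi, Real.volume_Icc, sub_zero, ENNReal.ofReal_one,
    Finset.prod_const_one]

theorem volume_eq_lintegral_volume_insertNth {n : ℕ} (i : Fin (n + 1))
    {E : Set (Fin (n + 1) → ℝ)} (hE : MeasurableSet E) :
    volume E = ∫⁻ y : Fin n → ℝ, volume {t : ℝ | i.insertNth t y ∈ E} := by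
  have he := (volume_preserving_piFinSuccAbove (fun _ : Fin (n + 1) => ℝ) i).symm
  rw [← he.measure_preimage hE.nullMeasurableSet, Measure.volume_eq_prod,
    Measure.prod_apply_symm (hE.preimage he.measurable)]
  rfl

theorem volume_le_of_volume_update_le {s : ℕ} {E : Set (Fin s → ℝ)}
    (hE : NullMeasurableSet E) (hEsub : E ⊆ unitCube s) (i : Fin s) {r : ℝ≥0∞}
    (h : ∀ x, volume {t : ℝ | update x i t ∈ E} ≤ r) : volume E ≤ r := by
  obtain ⟨n, rfl⟩ := Nat.exists_eq_add_one_of_ne_zero i.pos.ne'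
  obtain ⟨F, hFE, hF, hFae⟩ := hE.exists_measurable_subset_ae_eq
  have hslice : ∀ y,
      volume {t : ℝ | i.insertNth t y ∈ F} ≤ (unitCube n).indicator (fun _ => r) y := by
    intro y
    by_cases hy : y ∈ unitCube n
    · rw [indicator_of_mem hy]
      refine (measure_mono fun t ht => ?_).trans (h (i.insertNth 0 y))
      simpa using hFE ht
    · have hempty : {t : ℝ | i.insertNth t y ∈ F} = ∅ :=
        eq_empty_of_forall_notMem fun t ht => hy (mem_unitCube.2 fun j => by
          simpa using mem_unitCube.1 (hEsub (hFE ht)) (i.succAbove j))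
      rw [indicator_of_notMem hy, hempty, measure_empty]
  calc volume E = volume F := (measure_congr hFae).symm
    _ = ∫⁻ y, volume {t : ℝ | i.insertNth t y ∈ F} := volume_eq_lintegral_volume_insertNth i hF
    _ ≤ ∫⁻ y, (unitCube n).indicator (fun _ => r) y := lintegral_mono hslice
    _ = r := by
      rw [lintegral_indicator_const (isCompact_unitCube n).isClosed.measurableSet,
        volume_unitCube, mul_one]

theorem update_add_single {ι M : Type*} [DecidableEq ι] [AddZeroClass M] (x : ι → M) (i : ι)
    (t u : M) : update x i t + Pi.single i u = update x i (t + u) := by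
  funext j
  rcases eq_or_ne j i with rfl | hj
  · simp
  · simp [hj]

theorem Convex.setOf_update_mem {ι : Type*} [DecidableEq ι] {K : Set (ι → ℝ)}
    (hK : Convex ℝ K) (x : ι → ℝ) (i : ι) : Convex ℝ {t : ℝ | update x i t ∈ K} := by
  intro t ht u hu a b ha hb hab
  show update x i (a • t + b • u) ∈ K
  convert hK ht hu ha hb hab using 1
  funext j
  rcases eq_or_ne j i with rfl | hj
  · simp
  · simp [hj, ← add_mul, hab]

section Segments

variable {s : ℕ} {δ : ℝ}

theorem volume_unitCube_inter_add_segment_diff_le {K : Set (Fin s → ℝ)} (hK : Convex ℝ K)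
    (hKc : IsCompact K) (i : Fin s) (hδ : 0 ≤ δ) :
    volume (unitCube s ∩ ((K + Pi.single i '' Icc (-δ) δ) \ K)) ≤ ENNReal.ofReal (2 * δ) := by
  have hseg : IsCompact (Pi.single i '' Icc (-δ) δ : Set (Fin s → ℝ)) :=
    isCompact_Icc.image (continuous_single (A := fun _ => ℝ) i)
  refine volume_le_of_volume_update_le ?_ inter_subset_left i fun x => ?_
  · exact ((isCompact_unitCube s).isClosed.measurableSet.inter
      ((hKc.add hseg).isClosed.measurableSet.diff hKc.isClosed.measurableSet)).nullMeasurableSet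
  have hI := (hK.setOf_update_mem x i).ordConnected
  have hIb : Bornology.IsBounded {t : ℝ | update x i t ∈ K} :=
    (hKc.image (continuous_apply i)).isBounded.subset fun t ht => ⟨_, ht, by simp⟩
  refine (measure_mono ?_).trans (hI.volume_add_Icc_diff_le hIb hδ)
  rintro t ⟨-, ⟨k, hk, _, ⟨u, hu, rfl⟩, hsum⟩, htK⟩
  have hk' : update x i (t - u) = k := by
    apply add_right_cancel (b := Pi.single i u)
    rw [update_add_single, sub_add_cancel]
    exact hsum.symm
  exact ⟨⟨t - u, show update x i (t - u) ∈ K from hk' ▸ hk, u, hu, sub_add_cancel t u⟩, htK⟩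

theorem volume_diff_erosion_segment_le {K : Set (Fin s → ℝ)} (hK : Convex ℝ K)
    (hKsub : K ⊆ unitCube s) (i : Fin s) (hδ : 0 ≤ δ) :
    volume (K \ erosion K (Pi.single i '' Icc (-δ) δ)) ≤ ENNReal.ofReal (2 * δ) := by
  refine volume_le_of_volume_update_le ((hK.nullMeasurableSet _).diff
    ((hK.erosion _).nullMeasurableSet _)) (sdiff_subset.trans hKsub) i fun x => ?_
  have hI := (hK.setOf_update_mem x i).ordConnected
  have hIb : Bornology.IsBounded {t : ℝ | update x i t ∈ K} :=
    (Metric.isBounded_Icc (0 : ℝ) 1).subset fun t ht => by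
      simpa using mem_unitCube.1 (hKsub ht) i
  refine (measure_mono ?_).trans (hI.volume_diff_erosion_Icc_le hIb hδ)
  rintro t ⟨htK, hterode⟩
  refine ⟨htK, fun ht => hterode ?_⟩
  rintro _ ⟨u, hu, rfl⟩
  rw [update_add_single]
  exact ht u hu

theorem volume_unitCube_inter_add_sum_segment_diff_le {K : Set (Fin s → ℝ)} (hK : Convex ℝ K)
    (hKc : IsCompact K) (hδ : 0 ≤ δ) (T : Finset (Fin s)) :
    volume (unitCube s ∩ ((K + ∑ i ∈ T, Pi.single i '' Icc (-δ) δ) \ K)) ≤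
      T.card * ENNReal.ofReal (2 * δ) := by
  induction T using Finset.induction_on generalizing K with
  | empty => simp
  | insert i T hi ih =>
    set K' := K + Pi.single i '' Icc (-δ) δ
    have hK' : Convex ℝ K' := hK.add ((convex_Icc _ _).linear_image (LinearMap.single ℝ _ i))
    have hK'c : IsCompact K' :=
      hKc.add (isCompact_Icc.image (continuous_single (A := fun _ => ℝ) i))
    have hsub : unitCube s ∩ ((K + ∑ j ∈ insert i T, Pi.single j '' Icc (-δ) δ) \ K) ⊆
        unitCube s ∩ ((K' + ∑ j ∈ T, Pi.single j '' Icc (-δ) δ) \ K') ∪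
          unitCube s ∩ (K' \ K) := by
      rw [Finset.sum_insert hi, ← add_assoc]
      rintro x ⟨hx, hxK', hxK⟩
      by_cases h : x ∈ K'
      · exact Or.inr ⟨hx, h, hxK⟩
      · exact Or.inl ⟨hx, hxK', h⟩
    calc _ ≤ _ := (measure_mono hsub).trans (measure_union_le _ _)
      _ ≤ T.card * ENNReal.ofReal (2 * δ) + ENNReal.ofReal (2 * δ) :=
        add_le_add (ih hK' hK'c) (volume_unitCube_inter_add_segment_diff_le hK hKc i hδ)
      _ = (insert i T).card * ENNReal.ofReal (2 * δ) := by
        rw [Finset.card_insert_of_notMem hi, Nat.cast_add, Nat.cast_one, add_one_mul]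

theorem volume_diff_erosion_sum_segment_le {K : Set (Fin s → ℝ)} (hK : Convex ℝ K)
    (hKsub : K ⊆ unitCube s) (hδ : 0 ≤ δ) (T : Finset (Fin s)) :
    volume (K \ erosion K (∑ i ∈ T, Pi.single i '' Icc (-δ) δ)) ≤
      T.card * ENNReal.ofReal (2 * δ) := by
  induction T using Finset.induction_on generalizing K with
  | empty => simp [erosion]
  | insert i T hi ih =>
    set K' := erosion K (Pi.single i '' Icc (-δ) δ)
    have hK'K : K' ⊆ K := erosion_subset ⟨0, ⟨by linarith, hδ⟩, Pi.single_zero i⟩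
    have hsub : K \ erosion K (∑ j ∈ insert i T, Pi.single j '' Icc (-δ) δ) ⊆
        (K' \ erosion K' (∑ j ∈ T, Pi.single j '' Icc (-δ) δ)) ∪ (K \ K') := by
      rw [Finset.sum_insert hi, add_comm, erosion_add]
      rintro x ⟨hxK, hx⟩
      by_cases h : x ∈ K'
      · exact Or.inl ⟨h, hx⟩
      · exact Or.inr ⟨hxK, h⟩
    calc _ ≤ _ := (measure_mono hsub).trans (measure_union_le _ _)
      _ ≤ T.card * ENNReal.ofReal (2 * δ) + ENNReal.ofReal (2 * δ) :=
        add_le_add (ih (hK.erosion _) (hK'K.trans hKsub))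
          (volume_diff_erosion_segment_le hK hKsub i hδ)
      _ = (insert i T).card * ENNReal.ofReal (2 * δ) := by
        rw [Finset.card_insert_of_notMem hi, Nat.cast_add, Nat.cast_one, add_one_mul]

end Segments

section SupNorm

variable {s : ℕ} {δ : ℝ}

theorem closedBall_zero_subset_sum_segment (δ : ℝ) :
    closedBall (0 : Fin s → ℝ) δ ⊆ ∑ i, Pi.single i '' Icc (-δ) δ := by
  intro v hv
  rw [← Finset.univ_sum_single v]
  refine finsetSum_mem_finsetSum _ _ _ fun i _ => ⟨v i, ?_, rfl⟩
  exact abs_le.1 ((norm_le_pi_norm v i).trans (mem_closedBall_zero_iff.1 hv))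

theorem volume_unitCube_inter_add_closedBall_diff_le {K : Set (Fin s → ℝ)} (hK : Convex ℝ K)
    (hKc : IsCompact K) (hδ : 0 ≤ δ) :
    volume (unitCube s ∩ ((K + closedBall 0 δ) \ K)) ≤ s * ENNReal.ofReal (2 * δ) := by
  calc _ ≤ volume (unitCube s ∩ ((K + ∑ i, Pi.single i '' Icc (-δ) δ) \ K)) :=
        measure_mono (inter_subset_inter_right _ (sdiff_subset_sdiff_left
          (add_subset_add_left (closedBall_zero_subset_sum_segment δ))))
    _ ≤ _ := volume_unitCube_inter_add_sum_segment_diff_le hK hKc hδ _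
    _ = _ := by rw [Finset.card_univ, Fintype.card_fin]

theorem volume_diff_erosion_closedBall_le {K : Set (Fin s → ℝ)} (hK : Convex ℝ K)
    (hKsub : K ⊆ unitCube s) (hδ : 0 ≤ δ) :
    volume (K \ erosion K (closedBall 0 δ)) ≤ s * ENNReal.ofReal (2 * δ) := by
  calc _ ≤ volume (K \ erosion K (∑ i, Pi.single i '' Icc (-δ) δ)) :=
        measure_mono (sdiff_subset_sdiff_right
          (erosion_anti K (closedBall_zero_subset_sum_segment δ)))
    _ ≤ _ := volume_diff_erosion_sum_segment_le hK hKsub hδ _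
    _ = _ := by rw [Finset.card_univ, Fintype.card_fin]

end SupNorm

section Grid

variable {b k s : ℕ} {c : Fin s → ℕ}

theorem bCube_subset_unitCube (hc : ∀ j, c j < b ^ k) : bCube b k c ⊆ unitCube s := by
  intro x hx
  refine mem_unitCube.2 fun j => ?_
  obtain ⟨h0, h1⟩ := hx j (mem_univ j)
  have hbk : (0 : ℝ) < (b : ℝ) ^ k := by exact_mod_cast (Nat.zero_le _).trans_lt (hc j)
  have hc1 : (c j : ℝ) + 1 ≤ (b : ℝ) ^ k := by exact_mod_cast hc j
  exact ⟨(by positivity : (0 : ℝ) ≤ c j / (b : ℝ) ^ k).trans h0,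
    h1.le.trans ((div_le_one hbk).2 hc1)⟩

theorem dist_le_of_mem_bCube {x z : Fin s → ℝ} (hx : x ∈ bCube b k c) (hz : z ∈ bCube b k c) :
    dist x z ≤ ((b : ℝ) ^ k)⁻¹ := by
  refine (dist_pi_le_iff (by positivity)).2 fun j => ?_
  obtain ⟨hx0, hx1⟩ := hx j (mem_univ j)
  obtain ⟨hz0, hz1⟩ := hz j (mem_univ j)
  rw [add_div, one_div] at hx1 hz1
  rw [Real.dist_eq, abs_le]
  constructor <;> linarith

theorem exists_mem_bCube (hb : 0 < b) {x : Fin s → ℝ} (hx : ∀ j, x j ∈ Ico 0 1) :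
    ∃ c : Fin s → ℕ, (∀ j, c j < b ^ k) ∧ x ∈ bCube b k c := by
  have hbk : (0 : ℝ) < (b : ℝ) ^ k := by positivity
  refine ⟨fun j => ⌊x j * (b : ℝ) ^ k⌋₊, fun j => ?_, fun j _ => ⟨?_, ?_⟩⟩
  · have hlt : x j * (b : ℝ) ^ k < ((b ^ k : ℕ) : ℝ) := by
      push_cast
      nlinarith [(hx j).2]
    exact (Nat.floor_lt (mul_nonneg (hx j).1 hbk.le)).2 hlt
  · rw [div_le_iff₀ hbk]
    exact Nat.floor_le (mul_nonneg (hx j).1 hbk.le)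
  · rw [lt_div_iff₀ hbk]
    exact Nat.lt_floor_add_one _

theorem biUnion_bCube_diff_subset (J : Set (Fin s → ℝ)) :
    (⋃ c ∈ {c : Fin s → ℕ | (∀ j, c j < b ^ k) ∧ (bCube b k c ∩ closure J).Nonempty},
        bCube b k c) \ J ⊆
      unitCube s ∩ ((closure J + closedBall 0 ((b : ℝ) ^ k)⁻¹) \ closure J) ∪ (closure J \ J) := by
  rintro x ⟨hx, hxJ⟩
  obtain ⟨c, ⟨hc, z, hzc, hzJ⟩, hxc⟩ := mem_iUnion₂.1 hx
  by_cases hx' : x ∈ closure J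
  · exact Or.inr ⟨hx', hxJ⟩
  refine Or.inl ⟨bCube_subset_unitCube hc hxc, ⟨z, hzJ, x - z, ?_, add_sub_cancel z x⟩, hx'⟩
  rw [mem_closedBall_zero_iff, ← dist_eq_norm]
  exact dist_le_of_mem_bCube hxc hzc

theorem diff_biUnion_bCube_subset (hb : 0 < b) {J : Set (Fin s → ℝ)} (hJ : J ⊆ unitCube s) :
    J \ ⋃ c ∈ {c : Fin s → ℕ | (∀ j, c j < b ^ k) ∧ bCube b k c ⊆ J}, bCube b k c ⊆
      J \ erosion J (closedBall 0 ((b : ℝ) ^ k)⁻¹) ∪ ⋃ j, {x | x j = 1} := by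
  rintro x ⟨hxJ, hx⟩
  by_cases h1 : ∃ j, x j = 1
  · exact Or.inr (mem_iUnion.2 h1)
  simp only [not_exists] at h1
  refine Or.inl ⟨hxJ, fun hxe => hx ?_⟩
  have hx01 : ∀ j, x j ∈ Ico 0 1 := fun j =>
    ⟨(mem_unitCube.1 (hJ hxJ) j).1, lt_of_le_of_ne (mem_unitCube.1 (hJ hxJ) j).2 (h1 j)⟩
  obtain ⟨c, hc, hxc⟩ := exists_mem_bCube (k := k) hb hx01
  refine mem_iUnion₂.2 ⟨c, ⟨hc, fun y hy => ?_⟩, hxc⟩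
  have hyx : y - x ∈ closedBall (0 : Fin s → ℝ) ((b : ℝ) ^ k)⁻¹ := by
    rw [mem_closedBall_zero_iff, ← dist_eq_norm]
    exact dist_le_of_mem_bCube hy hxc
  simpa using hxe (y - x) hyx

end Grid

theorem natCast_mul_ofReal_two_mul_le (s : ℕ) {δ : ℝ} (hδ : 0 ≤ δ) :
    (s : ℝ≥0∞) * ENNReal.ofReal (2 * δ) ≤ ENNReal.ofReal (2 * s * √s * δ) := by
  rw [← ENNReal.ofReal_natCast, ← ENNReal.ofReal_mul (Nat.cast_nonneg _)]
  refine ENNReal.ofReal_le_ofReal ?_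
  have hs : (s : ℝ) ≤ s * √s := by
    rcases Nat.eq_zero_or_pos s with rfl | hs
    · simp
    · exact le_mul_of_one_le_right (Nat.cast_nonneg _) (Real.one_le_sqrt.2 (by exact_mod_cast hs))
  nlinarith

theorem convex_cube_approximation_general (b s k : ℕ) (hb : 2 ≤ b)
    (J : Set (Fin s → ℝ)) (hJconv : Convex ℝ J) (hJsub : J ⊆ unitCube s) :
    volume ((⋃ c ∈ {c : Fin s → ℕ | (∀ j, c j < b ^ k) ∧
          (bCube b k c ∩ closure J).Nonempty}, bCube b k c) \ J)
        ≤ ENNReal.ofReal (2 * s * Real.sqrt s / (b : ℝ) ^ k) ∧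
    volume (J \ ⋃ c ∈ {c : Fin s → ℕ | (∀ j, c j < b ^ k) ∧ bCube b k c ⊆ J}, bCube b k c)
        ≤ ENNReal.ofReal (2 * s * Real.sqrt s / (b : ℝ) ^ k) := by
  have hδ : (0 : ℝ) ≤ ((b : ℝ) ^ k)⁻¹ := by positivity
  have hbound := natCast_mul_ofReal_two_mul_le s hδ
  rw [← div_eq_mul_inv] at hbound
  have hJc : IsCompact (closure J) := (isCompact_unitCube s).of_isClosed_subset isClosed_closure
    (closure_minimal hJsub (isCompact_unitCube s).isClosed)
  have hfrontier : volume (closure J \ J) = 0 := measure_mono_null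
    (sdiff_subset_sdiff_right interior_subset) (hJconv.addHaar_frontier volume)
  have hfaces : volume (⋃ j, {x : Fin s → ℝ | x j = 1}) = 0 :=
    measure_iUnion_null fun j => Measure.pi_hyperplane (fun _ => volume) j 1
  constructor
  · calc _ ≤ _ := (measure_mono (biUnion_bCube_diff_subset J)).trans (measure_union_le _ _)
      _ ≤ _ := by
        rw [hfrontier, add_zero]
        exact (volume_unitCube_inter_add_closedBall_diff_le hJconv.closure hJc hδ).trans hbound
  · calc _ ≤ _ := (measure_mono (diff_biUnion_bCube_subset (by omega) hJsub)).trans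
          (measure_union_le _ _)
      _ ≤ _ := by
        rw [hfaces, add_zero]
        exact (volume_diff_erosion_closedBall_le hJconv hJsub hδ).trans hbound

theorem convex_cube_approximation (b s k : ℕ) (hb : 2 ≤ b) (hs : 1 ≤ s)
    (J : Set (Fin s → ℝ)) (hJconv : Convex ℝ J) (hJsub : J ⊆ unitCube s) :
    volume ((⋃ c ∈ {c : Fin s → ℕ | (∀ j, c j < b ^ k) ∧
          (bCube b k c ∩ closure J).Nonempty}, bCube b k c) \ J)
        ≤ ENNReal.ofReal (2 * s * Real.sqrt s / (b : ℝ) ^ k) ∧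
    volume (J \ ⋃ c ∈ {c : Fin s → ℕ | (∀ j, c j < b ^ k) ∧ bCube b k c ⊆ J}, bCube b k c)
        ≤ ENNReal.ofReal (2 * s * Real.sqrt s / (b : ℝ) ^ k) :=
  convex_cube_approximation_general b s k hb J hJconv hJsub
end

section
/- Let A ⊆ [0,1]^s be a pseudo-convex set with an admissible convex covering A_1,…,A_p with q convex parts of A, i.e. A_1,…,A_p are pairwise disjoint convex subsets of [0,1]^s covering A, with A_j ⊆ A for j = 1,…,q and A_j \ A convex for j = q+1,…,p. Then for any point set P_N = {x_0,…,x_{N-1}} ⊆ [0,1]^s, the local discrepancy of A satisfies |(1/N)∑_{n=0}^{N-1} 1_A(x_n) − λ(A)| ≤ (2p − q)·J_N(P_N), where J_N(P_N) is the isotropic discrepancy of P_N. -/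
open MeasureTheory Set
open scoped ENNReal

/-- Local discrepancy `|(1/N) ∑ 1_B(x_n) - λ(B)|` of the point set `x` at the test set `B`. -/
noncomputable def empDisc {s : ℕ} (N : ℕ) (x : Fin N → (Fin s → ℝ))
    (B : Set (Fin s → ℝ)) : ℝ :=
  |(1 / (N : ℝ)) * ∑ n, Set.indicator B (fun _ => (1 : ℝ)) (x n) - (volume B).toReal|

/-- Isotropic discrepancy: supremum of the local discrepancy over all convex subsets of the
unit cube. -/
noncomputable def isoDisc {s : ℕ} (N : ℕ) (x : Fin N → (Fin s → ℝ)) : ℝ :=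
  sSup {r : ℝ | ∃ J : Set (Fin s → ℝ), Convex ℝ J ∧ J ⊆ unitCube s ∧ r = empDisc N x J}

theorem pseudoConvex_empDisc_le (s p q N : ℕ) (hq : q ≤ p)
    (A0 : Set (Fin s → ℝ)) (hA0open : IsOpen A0) (hA0sub : A0 ⊆ unitCube s)
    (A : Fin p → Set (Fin s → ℝ))
    (hconv : ∀ j, Convex ℝ (A j)) (hsub : ∀ j, A j ⊆ unitCube s)
    (hdisj : ∀ i j, i ≠ j → Disjoint (A i) (A j))
    (hcover : A0 ⊆ ⋃ j, A j)
    (hq1 : ∀ j : Fin p, (j : ℕ) < q → A j ⊆ A0)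
    (hq2 : ∀ j : Fin p, q ≤ (j : ℕ) → Convex ℝ (A j \ A0))
    (x : Fin N → (Fin s → ℝ)) (hx : ∀ n, x n ∈ unitCube s) :
    empDisc N x A0 ≤ (2 * (p : ℝ) - q) * isoDisc N x := by
  classical
  set D : Set (Fin s → ℝ) → ℝ := fun B =>
    (1 / (N : ℝ)) * ∑ n, Set.indicator B (fun _ => (1 : ℝ)) (x n) - (volume B).toReal with hD
  have hED : ∀ B, empDisc N x B = |D B| := fun B => rfl
  set J : ℝ := isoDisc N x with hJdef
  have hcube : volume (unitCube s) = 1 := by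
    rw [unitCube, volume_pi_pi]; simp [Real.volume_Icc]
  have hfin : ∀ B : Set (Fin s → ℝ), B ⊆ unitCube s → volume B ≠ ∞ := by
    intro B hB
    exact ne_top_of_le_ne_top (by simp [hcube]) (hcube ▸ measure_mono hB)
  have hbdd : ∀ B : Set (Fin s → ℝ), B ⊆ unitCube s → empDisc N x B ≤ 1 := by
    intro B hB
    have hind0 : ∀ y, (0:ℝ) ≤ Set.indicator B (fun _ => (1 : ℝ)) y :=
      fun y => Set.indicator_nonneg (fun _ _ => zero_le_one) y
    have hind1 : ∀ y, Set.indicator B (fun _ => (1 : ℝ)) y ≤ 1 := by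
      intro y
      exact Set.indicator_apply_le' (fun _ => le_refl 1) (fun _ => zero_le_one)
    have hS0 : (0:ℝ) ≤ ∑ n, Set.indicator B (fun _ => (1 : ℝ)) (x n) :=
      Finset.sum_nonneg fun n _ => hind0 _
    have hSN : ∑ n, Set.indicator B (fun _ => (1 : ℝ)) (x n) ≤ (N : ℝ) := by
      calc ∑ n, Set.indicator B (fun _ => (1 : ℝ)) (x n) ≤ ∑ _n : Fin N, (1:ℝ) :=
            Finset.sum_le_sum fun n _ => hind1 _
        _ = (N : ℝ) := by simp
    have ha1 : (1 / (N : ℝ)) * ∑ n, Set.indicator B (fun _ => (1 : ℝ)) (x n) ≤ 1 := by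
      rcases Nat.eq_zero_or_pos N with h0 | h0
      · subst h0; simp
      · have hN : (0:ℝ) < N := by exact_mod_cast h0
        rw [div_mul_eq_mul_div, one_mul, div_le_one hN]; exact hSN
    have ha0 : (0:ℝ) ≤ (1 / (N : ℝ)) * ∑ n, Set.indicator B (fun _ => (1 : ℝ)) (x n) := by
      positivity
    have hb1 : (volume B).toReal ≤ 1 := by
      have : volume B ≤ 1 := hcube ▸ measure_mono hB
      simpa using ENNReal.toReal_mono (by simp) this
    have hb0 : (0:ℝ) ≤ (volume B).toReal := ENNReal.toReal_nonneg
    rw [empDisc, abs_sub_le_iff]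
    constructor <;> linarith
  have hmemJ : ∀ B : Set (Fin s → ℝ), Convex ℝ B → B ⊆ unitCube s → empDisc N x B ≤ J := by
    intro B hc hB
    exact le_csSup ⟨1, fun r ⟨J', h1, h2, h3⟩ => h3 ▸ hbdd J' h2⟩ ⟨B, hc, hB, rfl⟩
  have hJ0 : (0:ℝ) ≤ J :=
    le_trans (abs_nonneg _) (hmemJ ∅ convex_empty (empty_subset _))
  set d : Fin p → ℝ := fun j => D (A0 ∩ A j) with hd
  -- pointwise indicator split
  have hpt : ∀ y, Set.indicator A0 (fun _ => (1:ℝ)) y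
      = ∑ j, Set.indicator (A0 ∩ A j) (fun _ => (1:ℝ)) y := by
    intro y
    by_cases hy : y ∈ A0
    · obtain ⟨j0, hj0⟩ := mem_iUnion.mp (hcover hy)
      rw [Set.indicator_of_mem hy]
      rw [Finset.sum_eq_single j0]
      · rw [Set.indicator_of_mem (Set.mem_inter hy hj0)]
      · intro j _ hne
        exact Set.indicator_of_notMem
          (fun hmem => ((hdisj j j0 hne).ne_of_mem hmem.2 hj0) rfl) _
      · intro h; exact absurd (Finset.mem_univ j0) h
    · rw [Set.indicator_of_notMem hy, eq_comm]
      exact Finset.sum_eq_zero fun j _ => Set.indicator_of_notMem (fun h => hy h.1) _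
  have hA0eq : A0 = ⋃ j, A0 ∩ A j := by
    rw [← Set.inter_iUnion]
    exact (Set.inter_eq_left.mpr hcover).symm
  have hvol : (volume A0).toReal = ∑ j, (volume (A0 ∩ A j)).toReal := by
    have hmeas : ∀ j, NullMeasurableSet (A0 ∩ A j) volume := fun j =>
      hA0open.measurableSet.nullMeasurableSet.inter ((hconv j).nullMeasurableSet volume)
    have hdis : Pairwise fun i j => AEDisjoint volume (A0 ∩ A i) (A0 ∩ A j) := fun i j hne =>
      ((hdisj i j hne).mono inter_subset_right inter_subset_right).aedisjoint
    calc (volume A0).toReal = (volume (⋃ j, A0 ∩ A j)).toReal := by rw [← hA0eq]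
      _ = (∑' j, volume (A0 ∩ A j)).toReal := by rw [measure_iUnion₀ hdis hmeas]
      _ = (∑ j, volume (A0 ∩ A j)).toReal := by rw [tsum_fintype]
      _ = ∑ j, (volume (A0 ∩ A j)).toReal :=
          ENNReal.toReal_sum fun j _ => hfin _ (inter_subset_left.trans hA0sub)
  have hsplit : D A0 = ∑ j, d j := by
    have hS : ∑ n, Set.indicator A0 (fun _ => (1:ℝ)) (x n)
        = ∑ j, ∑ n, Set.indicator (A0 ∩ A j) (fun _ => (1:ℝ)) (x n) := by
      rw [Finset.sum_congr rfl fun n _ => hpt (x n), Finset.sum_comm]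
    simp only [hD, hd]
    rw [hS, hvol, Finset.mul_sum, Finset.sum_sub_distrib]
  have hbound : ∀ j, |d j| ≤ (if (j:ℕ) < q then J else 2*J) := by
    intro j
    by_cases hj : (j:ℕ) < q
    · rw [if_pos hj]
      have heq : A0 ∩ A j = A j := inter_eq_right.mpr (hq1 j hj)
      have : d j = D (A j) := by rw [hd]; simp only []; rw [heq]
      rw [this, ← hED]
      exact hmemJ (A j) (hconv j) (hsub j)
    · rw [if_neg hj]
      push_neg at hj
      have hind : ∀ y, Set.indicator (A0 ∩ A j) (fun _ => (1:ℝ)) y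
          = Set.indicator (A j) (fun _ => (1:ℝ)) y
            - Set.indicator (A j \ A0) (fun _ => (1:ℝ)) y := by
        intro y
        by_cases hyA : y ∈ A j
        · by_cases hy0 : y ∈ A0
          · rw [Set.indicator_of_mem (Set.mem_inter hy0 hyA), Set.indicator_of_mem hyA,
              Set.indicator_of_notMem (fun h => h.2 hy0)]
            ring
          · rw [Set.indicator_of_notMem (fun h => hy0 h.1), Set.indicator_of_mem hyA,
              Set.indicator_of_mem (show _ ∈ A j \ A0 from ⟨hyA, hy0⟩)]
            ring
        · rw [Set.indicator_of_notMem (fun h => hyA h.2), Set.indicator_of_notMem hyA,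
            Set.indicator_of_notMem (fun h => hyA h.1)]
          ring
      have hvol2 : (volume (A0 ∩ A j)).toReal
          = (volume (A j)).toReal - (volume (A j \ A0)).toReal := by
        have := measure_inter_add_diff (μ := volume) (A j) hA0open.measurableSet
        have hfa : volume (A j ∩ A0) ≠ ∞ := hfin _ (inter_subset_left.trans (hsub j))
        have hfb : volume (A j \ A0) ≠ ∞ := hfin _ (diff_subset.trans (hsub j))
        have h' : (volume (A j ∩ A0)).toReal + (volume (A j \ A0)).toReal
            = (volume (A j)).toReal := by
          rw [← ENNReal.toReal_add hfa hfb, this]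
        rw [inter_comm]
        linarith
      have hdj : d j = D (A j) - D (A j \ A0) := by
        simp only [hd, hD]
        rw [Finset.sum_congr rfl fun n _ => hind (x n), hvol2, Finset.sum_sub_distrib,
          mul_sub]
        ring
      rw [hdj]
      calc |D (A j) - D (A j \ A0)| ≤ |D (A j)| + |D (A j \ A0)| := abs_sub _ _
        _ ≤ J + J := add_le_add
            (hED _ ▸ hmemJ (A j) (hconv j) (hsub j))
            (hED _ ▸ hmemJ (A j \ A0) (hq2 j hj) (diff_subset.trans (hsub j)))
        _ = 2 * J := by ring
  have hsum : ∑ j : Fin p, (if (j:ℕ) < q then J else 2*J) = (2*(p:ℝ) - q) * J := by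
    rw [Fin.sum_univ_eq_sum_range (fun i => if i < q then J else 2*J) p]
    rw [Finset.range_eq_Ico, ← Finset.sum_Ico_consecutive _ (Nat.zero_le q) hq]
    have h1 : ∑ i ∈ Finset.Ico 0 q, (if i < q then J else 2*J) = (q:ℝ) * J := by
      rw [Finset.sum_congr rfl fun i hi => if_pos (Finset.mem_Ico.mp hi).2]
      simp [mul_comm]
    have h2 : ∑ i ∈ Finset.Ico q p, (if i < q then J else 2*J) = ((p - q : ℕ):ℝ) * (2*J) := by
      rw [Finset.sum_congr rfl fun i hi => if_neg (not_lt.mpr (Finset.mem_Ico.mp hi).1)]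
      simp [Nat.card_Ico, mul_comm, mul_assoc]
    rw [h1, h2, Nat.cast_sub hq]
    ring
  calc empDisc N x A0 = |∑ j, d j| := by rw [hED, hsplit]
    _ ≤ ∑ j, |d j| := Finset.abs_sum_le_sum_abs _ _
    _ ≤ ∑ j : Fin p, (if (j:ℕ) < q then J else 2*J) := Finset.sum_le_sum fun j _ => hbound j
    _ = (2*(p:ℝ) - q) * J := hsum
end

section
/- Sign-choice lower bound: let C_1,…,C_M be pairwise disjoint measurable subsets of a measurable set B ⊆ [0,1]^s, each with λ(C_i) = 1/(2N), and let P_N be any N-point set in [0,1]^s. Then for each i, |Δ_{P_N}(C_i)| ≥ 1/2 (where Δ_{P_N}(H) = ∑_n 1_H(x_n) − Nλ(H)), and there is a choice of signs σ ∈ {−1,1}^M such that, with J = B \ ⋃_{i:σ_i=−1} C_i and J' = B \ ⋃_{i:σ_i=+1} C_i, at least one of |Δ_{P_N}(J)|, |Δ_{P_N}(J')| is at least M/4. -/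
open MeasureTheory Set
open scoped ENNReal

/-- The (unnormalized) local discrepancy function `Δ_{P_N}(H) = ∑ 1_H(x_n) - N·λ(H)`. -/
noncomputable def locDisc {s N : ℕ} (x : Fin N → (Fin s → ℝ)) (H : Set (Fin s → ℝ)) : ℝ :=
  (∑ n, Set.indicator H (fun _ => (1 : ℝ)) (x n)) - (N : ℝ) * (volume H).toReal

section aux

variable {s N : ℕ} (x : Fin N → (Fin s → ℝ))

lemma indicator_biUnion_aux {M : ℕ} (C : Fin M → Set (Fin s → ℝ))
    (hCdisj : ∀ i j, i ≠ j → Disjoint (C i) (C j)) (T : Finset (Fin M))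
    (y : Fin s → ℝ) :
    Set.indicator (⋃ i ∈ T, C i) (fun _ => (1 : ℝ)) y
      = ∑ i ∈ T, Set.indicator (C i) (fun _ => (1 : ℝ)) y := by
  by_cases hy : y ∈ ⋃ i ∈ T, C i
  · obtain ⟨i, hiT, hi⟩ := Set.mem_iUnion₂.mp hy
    rw [Set.indicator_of_mem hy]
    rw [Finset.sum_eq_single i]
    · rw [Set.indicator_of_mem hi]
    · intro j hjT hji
      exact Set.indicator_of_notMem
        (fun hj => (hCdisj j i hji).ne_of_mem hj hi rfl) _
    · intro h; exact absurd hiT h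
  · rw [Set.indicator_of_notMem hy]
    symm
    refine Finset.sum_eq_zero fun i hiT => Set.indicator_of_notMem ?_ _
    exact fun hi => hy (Set.mem_iUnion₂.mpr ⟨i, hiT, hi⟩)

lemma locDisc_biUnion {M : ℕ} (C : Fin M → Set (Fin s → ℝ))
    (hCm : ∀ i, MeasurableSet (C i))
    (hCdisj : ∀ i j, i ≠ j → Disjoint (C i) (C j))
    (hfin : ∀ i, volume (C i) ≠ ∞) (T : Finset (Fin M)) :
    locDisc x (⋃ i ∈ T, C i) = ∑ i ∈ T, locDisc x (C i) := by
  unfold locDisc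
  have hvol : volume (⋃ i ∈ T, C i) = ∑ i ∈ T, volume (C i) :=
    measure_biUnion_finset (fun i _ j _ hij => hCdisj i j hij) (fun i _ => hCm i)
  rw [hvol, ENNReal.toReal_sum (fun i _ => hfin i)]
  have h1 : (∑ n, Set.indicator (⋃ i ∈ T, C i) (fun _ => (1:ℝ)) (x n))
      = ∑ n, ∑ i ∈ T, Set.indicator (C i) (fun _ => (1:ℝ)) (x n) :=
    Finset.sum_congr rfl fun n _ => indicator_biUnion_aux C hCdisj T (x n)
  rw [h1, Finset.sum_comm, Finset.mul_sum, Finset.sum_sub_distrib]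

lemma locDisc_diff (Bs U : Set (Fin s → ℝ)) (hU : MeasurableSet U)
    (hsub : U ⊆ Bs) (hBfin : volume Bs ≠ ∞) :
    locDisc x (Bs \ U) = locDisc x Bs - locDisc x U := by
  unfold locDisc
  have hvol : volume (Bs \ U) = volume Bs - volume U := measure_diff hsub hU.nullMeasurableSet
    (ne_top_of_le_ne_top hBfin (measure_mono hsub))
  rw [hvol, ENNReal.toReal_sub_of_le (measure_mono hsub) hBfin]
  have hind : ∀ y, Set.indicator (Bs \ U) (fun _ => (1:ℝ)) y
      = Set.indicator Bs (fun _ => (1:ℝ)) y - Set.indicator U (fun _ => (1:ℝ)) y := by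
    intro y
    by_cases hyU : y ∈ U
    · rw [Set.indicator_of_notMem (fun h => h.2 hyU), Set.indicator_of_mem (hsub hyU),
        Set.indicator_of_mem hyU]; ring
    · by_cases hyB : y ∈ Bs
      · rw [Set.indicator_of_mem (show y ∈ Bs \ U from ⟨hyB, hyU⟩), Set.indicator_of_mem hyB,
          Set.indicator_of_notMem hyU]; ring
      · rw [Set.indicator_of_notMem (fun h => hyB h.1), Set.indicator_of_notMem hyB,
          Set.indicator_of_notMem hyU]; ring
  simp only [hind]
  rw [Finset.sum_sub_distrib]
  ring

end aux

theorem sign_choice_lower_bound (s N M : ℕ) (hN : 0 < N)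
    (x : Fin N → (Fin s → ℝ)) (hx : ∀ n, x n ∈ unitCube s)
    (B : Set (Fin s → ℝ)) (hB : MeasurableSet B) (hBsub : B ⊆ unitCube s)
    (C : Fin M → Set (Fin s → ℝ)) (hCm : ∀ i, MeasurableSet (C i))
    (hCsub : ∀ i, C i ⊆ B) (hCdisj : ∀ i j, i ≠ j → Disjoint (C i) (C j))
    (hCvol : ∀ i, volume (C i) = ((2 * N : ℕ) : ℝ≥0∞)⁻¹) :
    (∀ i, (1 : ℝ) / 2 ≤ |locDisc x (C i)|) ∧
    ∃ σ : Fin M → ℝ, (∀ i, σ i = 1 ∨ σ i = -1) ∧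
      ((M : ℝ) / 4 ≤ |locDisc x (B \ ⋃ i ∈ {i | σ i = -1}, C i)| ∨
       (M : ℝ) / 4 ≤ |locDisc x (B \ ⋃ i ∈ {i | σ i = 1}, C i)|) := by
  classical
  have h2N : ((2 * N : ℕ) : ℝ) ≠ 0 := by positivity
  -- toReal of volumes
  have hvolR : ∀ i, (volume (C i)).toReal = 1 / (2 * N : ℝ) := by
    intro i
    rw [hCvol i, ENNReal.toReal_inv, ENNReal.toReal_natCast]
    push_cast
    rw [one_div]
  have hfin : ∀ i, volume (C i) ≠ ∞ := by
    intro i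
    rw [hCvol i]
    exact ENNReal.inv_ne_top.mpr (by exact_mod_cast Nat.mul_ne_zero two_ne_zero hN.ne')
  -- volume of B finite
  have hBfin : volume B ≠ ∞ := by
    have : volume (unitCube s) = 1 := by
      simp [unitCube, Real.volume_Icc_pi]
    exact ne_top_of_le_ne_top (by rw [this]; exact ENNReal.one_ne_top) (measure_mono hBsub)
  -- Part 1
  have part1 : ∀ i, (1 : ℝ) / 2 ≤ |locDisc x (C i)| := by
    intro i
    have hsum : (∑ n, Set.indicator (C i) (fun _ => (1 : ℝ)) (x n))
        = ((Finset.univ.filter fun n => x n ∈ C i).card : ℝ) := by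
      rw [Finset.card_filter]
      push_cast
      refine Finset.sum_congr rfl fun n _ => ?_
      by_cases h : x n ∈ C i <;> simp [Set.indicator_apply, h]
    have hDisc : locDisc x (C i)
        = ((Finset.univ.filter fun n => x n ∈ C i).card : ℝ) - 1 / 2 := by
      unfold locDisc
      rw [hsum, hvolR i]
      have : (N : ℝ) * (1 / (2 * N : ℝ)) = 1 / 2 := by
        have hN' : (N:ℝ) ≠ 0 := Nat.cast_ne_zero.mpr hN.ne'
        field_simp
      rw [this]
    rw [hDisc]
    set k := (Finset.univ.filter fun n => x n ∈ C i).card with hk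
    rcases Nat.eq_zero_or_pos k with h0 | h1
    · rw [h0, Nat.cast_zero, zero_sub, abs_neg, abs_of_nonneg (by norm_num : (0:ℝ) ≤ 1/2)]
    · have : (1 : ℝ) ≤ (k : ℝ) := by exact_mod_cast h1
      rw [abs_of_nonneg (by linarith)]
      linarith
  refine ⟨part1, ?_⟩
  -- sign choice
  set σ : Fin M → ℝ := fun i => if 0 ≤ locDisc x (C i) then 1 else -1 with hσ
  have hσval : ∀ i, σ i = 1 ∨ σ i = -1 := by
    intro i; by_cases h : 0 ≤ locDisc x (C i) <;> simp [hσ, h]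
  refine ⟨σ, hσval, ?_⟩
  have hσmul : ∀ i, (1 : ℝ) / 2 ≤ σ i * locDisc x (C i) := by
    intro i
    by_cases h : 0 ≤ locDisc x (C i)
    · have := part1 i
      rw [abs_of_nonneg h] at this
      simpa [hσ, h] using this
    · have := part1 i
      rw [abs_of_neg (not_le.mp h)] at this
      simp only [hσ, h, if_false]
      linarith
  set Tm : Finset (Fin M) := Finset.univ.filter fun i => σ i = -1 with hTm
  set Tp : Finset (Fin M) := Finset.univ.filter fun i => σ i = 1 with hTp
  have hUm : (⋃ i ∈ {i | σ i = -1}, C i) = ⋃ i ∈ Tm, C i := by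
    ext y; simp [hTm]
  have hUp : (⋃ i ∈ {i | σ i = 1}, C i) = ⋃ i ∈ Tp, C i := by
    ext y; simp [hTp]
  have hsubm : (⋃ i ∈ Tm, C i) ⊆ B := Set.iUnion₂_subset fun i _ => hCsub i
  have hsubp : (⋃ i ∈ Tp, C i) ⊆ B := Set.iUnion₂_subset fun i _ => hCsub i
  have hmm : MeasurableSet (⋃ i ∈ Tm, C i) := Tm.measurableSet_biUnion fun i _ => hCm i
  have hmp : MeasurableSet (⋃ i ∈ Tp, C i) := Tp.measurableSet_biUnion fun i _ => hCm i
  have hJm := locDisc_diff x B (⋃ i ∈ Tm, C i) hmm hsubm hBfin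
  have hJp := locDisc_diff x B (⋃ i ∈ Tp, C i) hmp hsubp hBfin
  have hSm := locDisc_biUnion x C hCm hCdisj hfin Tm
  have hSp := locDisc_biUnion x C hCm hCdisj hfin Tp
  -- the key sum identity
  have hnotp : ∀ i, ¬ (σ i = 1) ↔ σ i = -1 := by
    intro i
    rcases hσval i with h | h
    · rw [h]; norm_num
    · rw [h]; norm_num
  have hTmeq : Tm = Finset.univ.filter fun i => ¬ (σ i = 1) := by
    rw [hTm]
    apply Finset.filter_congr
    intro i _
    simp [hnotp i]
  have hsum_split : ∑ i ∈ Tp, locDisc x (C i) - ∑ i ∈ Tm, locDisc x (C i)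
      = ∑ i, σ i * locDisc x (C i) := by
    rw [hTmeq, hTp]
    rw [← Finset.sum_filter_add_sum_filter_not Finset.univ (fun i => σ i = 1)
      (fun i => σ i * locDisc x (C i))]
    have e1 : ∑ i ∈ Finset.univ.filter (fun i => σ i = 1), σ i * locDisc x (C i)
        = ∑ i ∈ Finset.univ.filter (fun i => σ i = 1), locDisc x (C i) := by
      refine Finset.sum_congr rfl fun i hi => ?_
      rw [(Finset.mem_filter.mp hi).2, one_mul]
    have e2 : ∑ i ∈ Finset.univ.filter (fun i => ¬ σ i = 1), σ i * locDisc x (C i)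
        = -∑ i ∈ Finset.univ.filter (fun i => ¬ σ i = 1), locDisc x (C i) := by
      rw [← Finset.sum_neg_distrib]
      refine Finset.sum_congr rfl fun i hi => ?_
      rw [(hnotp i).mp (Finset.mem_filter.mp hi).2]; ring
    rw [e1, e2]; ring
  have hsum_lb : (M : ℝ) / 2 ≤ ∑ i, σ i * locDisc x (C i) := by
    calc (M : ℝ) / 2 = ∑ _i : Fin M, (1 : ℝ) / 2 := by
          rw [Finset.sum_const, Finset.card_univ, Fintype.card_fin, nsmul_eq_mul]; ring
      _ ≤ ∑ i, σ i * locDisc x (C i) := Finset.sum_le_sum fun i _ => hσmul i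
  have hdiff : (M : ℝ) / 2 ≤ locDisc x (B \ ⋃ i ∈ Tm, C i) - locDisc x (B \ ⋃ i ∈ Tp, C i) := by
    rw [hJm, hJp, hSm, hSp]
    linarith [hsum_lb, hsum_split]
  by_contra hcon
  push_neg at hcon
  obtain ⟨h1, h2⟩ := hcon
  rw [hUm] at h1
  rw [hUp] at h2
  have b1 := le_abs_self (locDisc x (B \ ⋃ i ∈ Tm, C i))
  have b2 := neg_abs_le (locDisc x (B \ ⋃ i ∈ Tp, C i))
  linarith
end

section
/- Lower bound for discrepancy with respect to a density: for every s ≥ 2 there is a constant c_s > 0 such that for every N and every N-point set P_N in [0,1]^s there exists a convex set J ⊆ [0,1]^s with |(1/N)∑_{n=0}^{N−1} 1_J(x_n) − λ(J)| ≥ c_s·N^{−2/(s+1)}. -/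
/-!
Schmidt's argument, with a paraboloid in place of the sphere. Let `K` be the part of the cube
below a concave paraboloid over the base `[0,1]^n` (`s = n + 1`), and place about `r⁻ⁿ` centres
`p_k`, at mutual distance `≥ 2r`, in the middle of the base. Lowering the tangent hyperplane at
`p_k` by `α r²` cuts from `K` a cap `C_k` of volume `γ rⁿ⁺²` lying over the ball of radius `r`
around `p_k`; so thin a cap lies in the half-space `H_j` below every other lowered tangent
hyperplane. Hence for
each set `S` of indices, the convex set `J_S = K ∩ ⋂_{k ∉ S} H_k` is the disjoint union of `J_∅`
and the caps `C_k`, `k ∈ S`, and the local discrepancy is additive: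
`Δ(J_S) = Δ(J_∅) + ∑_{k ∈ S} Δ(C_k)`.
Choosing `r ≍ N^(-1/(n+2))` makes `N λ(C_k) ≤ 1/2`, so `|Δ(C_k)| ≥ N λ(C_k)` whether or not the
cap contains a point. Taking for `S` the caps with `Δ(C_k) ≥ 0`, or their complement, one of the
two sets has `|Δ(J_S)| ≥ ½ ∑ |Δ(C_k)| ≳ r⁻ⁿ · N rⁿ⁺² = N r² ≍ N^(1 - 2/(s+1))`.
-/

open MeasureTheory Set
open scoped ENNReal

theorem exists_sum_abs_div_two_le_abs_add_sum {ι : Type*} [Fintype ι] (c : ℝ) (a : ι → ℝ) :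
    ∃ S : Finset ι, (∑ k, |a k|) / 2 ≤ |c + ∑ k ∈ S, a k| := by
  classical
  set P := Finset.univ.filter fun k => 0 ≤ a k
  have hsplit : ∑ k, |a k| = (c + ∑ k ∈ P, a k) - (c + ∑ k ∈ Pᶜ, a k) := by
    rw [← Finset.sum_add_sum_compl P,
      Finset.sum_congr rfl fun k hk => abs_of_nonneg (Finset.mem_filter.1 hk).2,
      Finset.sum_congr rfl fun k hk => abs_of_neg (by simpa [P] using hk), Finset.sum_neg_distrib]
    ring
  by_contra! h
  have := le_abs_self (c + ∑ k ∈ P, a k)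
  have := neg_abs_le (c + ∑ k ∈ Pᶜ, a k)
  linarith [h P, h Pᶜ]

theorem inter_iInter_notMem_eq_union {α ι : Type*} {K : Set α} {H : ι → Set α}
    (hsep : ∀ i j, i ≠ j → K \ H i ⊆ H j) (S : Finset ι) :
    K ∩ ⋂ k ∉ S, H k = (K ∩ ⋂ k, H k) ∪ ⋃ k ∈ S, K \ H k := by
  ext y
  simp only [mem_inter_iff, mem_iInter, mem_union, mem_iUnion, mem_sdiff, exists_prop]
  constructor
  · rintro ⟨hyK, hyH⟩
    by_cases hall : ∀ k, y ∈ H k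
    · exact Or.inl ⟨hyK, hall⟩
    · obtain ⟨k, hk⟩ := not_forall.1 hall
      exact Or.inr ⟨k, by_contra fun hkS => hk (hyH k hkS), hyK, hk⟩
  · rintro (⟨hyK, hyH⟩ | ⟨k, hkS, hyK, hk⟩)
    · exact ⟨hyK, fun k _ => hyH k⟩
    · exact ⟨hyK, fun j hjS => hsep k j (ne_of_mem_of_not_mem hkS hjS) ⟨hyK, hk⟩⟩

section LocalDiscrepancy

variable {α ι : Type*} [MeasurableSpace α] (μ : Measure α) {N : ℕ} (x : Fin N → α)

noncomputable def localDiscrepancy (A : Set α) : ℝ :=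
  ∑ n, A.indicator (fun _ => (1 : ℝ)) (x n) - N * μ.real A

variable {μ}

theorem localDiscrepancy_union {A B : Set α} (hd : Disjoint A B) (hB : MeasurableSet B)
    (hA : μ A ≠ ∞) (hB' : μ B ≠ ∞) :
    localDiscrepancy μ x (A ∪ B) = localDiscrepancy μ x A + localDiscrepancy μ x B := by
  simp only [localDiscrepancy, indicator_union_of_disjoint hd, Finset.sum_add_distrib,
    measureReal_union hd hB hA hB']
  ring

theorem localDiscrepancy_biUnion_finset {S : Finset ι} {C : ι → Set α}
    (hd : (S : Set ι).PairwiseDisjoint C) (hm : ∀ k ∈ S, MeasurableSet (C k))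
    (hfin : ∀ k ∈ S, μ (C k) ≠ ∞) :
    localDiscrepancy μ x (⋃ k ∈ S, C k) = ∑ k ∈ S, localDiscrepancy μ x (C k) := by
  simp only [localDiscrepancy, Finset.indicator_biUnion S C hd,
    measureReal_biUnion_finset hd hm hfin, Finset.sum_sub_distrib, Finset.mul_sum]
  rw [Finset.sum_comm]

/-- A set of small measure has discrepancy at least `N μ(A)` in absolute value: `-N μ(A)` if it
contains no point, at least `1 - N μ(A)` otherwise. -/
theorem mul_measureReal_le_abs_localDiscrepancy {A : Set α} (h : 2 * N * μ.real A ≤ 1) :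
    N * μ.real A ≤ |localDiscrepancy μ x A| := by
  have hnn : 0 ≤ (N : ℝ) * μ.real A := by positivity
  by_cases hx : ∃ n, x n ∈ A
  · obtain ⟨n, hn⟩ := hx
    have hcount : 1 ≤ ∑ n, A.indicator (fun _ => (1 : ℝ)) (x n) :=
      calc (1 : ℝ) = A.indicator (fun _ => 1) (x n) := (indicator_of_mem hn (fun _ => 1)).symm
        _ ≤ _ := Finset.single_le_sum (fun i _ => indicator_nonneg (fun _ _ => zero_le_one) _)
            (Finset.mem_univ n)
    calc (N : ℝ) * μ.real A ≤ localDiscrepancy μ x A := by rw [localDiscrepancy]; linarith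
      _ ≤ _ := le_abs_self _
  · simp only [not_exists] at hx
    simp [localDiscrepancy, indicator_of_notMem (hx _), abs_of_nonneg hnn]

theorem abs_one_div_mul_sum_indicator_sub {A : Set α} (hN : 0 < N) :
    |(1 / (N : ℝ)) * ∑ n, A.indicator (fun _ => (1 : ℝ)) (x n) - (μ A).toReal|
      = |localDiscrepancy μ x A| / N := by
  have hN' : (0 : ℝ) < N := Nat.cast_pos.2 hN
  rw [localDiscrepancy, measureReal_def, eq_div_iff hN'.ne', ← abs_of_pos hN', ← abs_mul,
    abs_of_pos hN']
  congr 1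
  field_simp

theorem exists_abs_localDiscrepancy_inter_iInter_ge [Fintype ι] {K : Set α} {H : ι → Set α}
    (hK : MeasurableSet K) (hH : ∀ k, MeasurableSet (H k)) (hKfin : μ K ≠ ∞)
    (hsep : ∀ i j, i ≠ j → K \ H i ⊆ H j) (hsmall : ∀ k, 2 * N * μ.real (K \ H k) ≤ 1) :
    ∃ S : Finset ι,
      (∑ k, N * μ.real (K \ H k)) / 2 ≤ |localDiscrepancy μ x (K ∩ ⋂ k ∉ S, H k)| := by
  have hfin : ∀ A ⊆ K, μ A ≠ ∞ := fun A hA => ne_top_of_le_ne_top hKfin (measure_mono hA)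
  have hdisj : Pairwise (Function.onFun Disjoint fun k => K \ H k) := fun i j hij =>
    disjoint_left.2 fun _ hi hj => hj.2 (hsep i j hij hi)
  have hadd : ∀ S : Finset ι, localDiscrepancy μ x (K ∩ ⋂ k ∉ S, H k)
      = localDiscrepancy μ x (K ∩ ⋂ k, H k) + ∑ k ∈ S, localDiscrepancy μ x (K \ H k) := by
    intro S
    rw [inter_iInter_notMem_eq_union hsep, localDiscrepancy_union x
      (disjoint_iUnion₂_right.2 fun k _ =>
        disjoint_left.2 fun _ hy hk => hk.2 (mem_iInter.1 hy.2 k))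
      (S.measurableSet_biUnion fun k _ => hK.diff (hH k)) (hfin _ inter_subset_left)
      (hfin _ (iUnion₂_subset fun k _ => sdiff_subset)),
      localDiscrepancy_biUnion_finset x (hdisj.set_pairwise _) (fun k _ => hK.diff (hH k))
      (fun k _ => hfin _ sdiff_subset)]
  obtain ⟨S, hS⟩ := exists_sum_abs_div_two_le_abs_add_sum (localDiscrepancy μ x (K ∩ ⋂ k, H k))
    fun k => localDiscrepancy μ x (K \ H k)
  refine ⟨S, ?_⟩
  rw [hadd]
  refine le_trans ?_ hS
  gcongr with k
  exact mul_measureReal_le_abs_localDiscrepancy x (hsmall k)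

end LocalDiscrepancy

section HeadTail

variable {n : ℕ}

def tailHead (n : ℕ) : (Fin (n + 1) → ℝ) →ₗ[ℝ] (Fin n → ℝ) × ℝ :=
  (LinearMap.funLeft ℝ ℝ Fin.succ).prod (LinearMap.proj 0)

@[simp]
theorem tailHead_apply (y : Fin (n + 1) → ℝ) : tailHead n y = (Fin.tail y, y 0) := rfl

theorem measurePreserving_tailHead (n : ℕ) : MeasurePreserving (tailHead n) volume volume :=
  Measure.measurePreserving_swap.comp (measurePreserving_piFinSuccAbove (fun _ => volume) 0)

theorem volume_setOf_head_mem_Ioo {f g : (Fin n → ℝ) → ℝ} (hf : Measurable f)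
    (hg : Measurable g) :
    volume {y : Fin (n + 1) → ℝ | y 0 ∈ Ioo (f (Fin.tail y)) (g (Fin.tail y))}
      = ∫⁻ u, ENNReal.ofReal (g u - f u) := by
  have h := (measurePreserving_tailHead n).measure_preimage
    (measurableSet_regionBetween hf hg MeasurableSet.univ).nullMeasurableSet
  rw [Measure.volume_eq_prod, volume_regionBetween_eq_lintegral' hf hg MeasurableSet.univ,
    Measure.restrict_univ] at h
  refine (congrArg volume ?_).trans h
  ext y
  simp [regionBetween]

theorem ConcaveOn.convex_setOf_head_lt {f : (Fin n → ℝ) → ℝ} (hf : ConcaveOn ℝ univ f) :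
    Convex ℝ {y : Fin (n + 1) → ℝ | y 0 < f (Fin.tail y)} := by
  simpa using hf.convex_strict_hypograph.linear_preimage (tailHead n)

theorem ConcaveOn.convex_setOf_head_le {f : (Fin n → ℝ) → ℝ} (hf : ConcaveOn ℝ univ f) :
    Convex ℝ {y : Fin (n + 1) → ℝ | y 0 ≤ f (Fin.tail y)} := by
  simpa using hf.convex_hypograph.linear_preimage (tailHead n)

end HeadTail

theorem convex_unitCube (s : ℕ) : Convex ℝ (unitCube s) :=
  convex_pi fun _ _ => convex_Icc 0 1

theorem lintegral_eq_ofReal_pow_finrank_mul_lintegral_comp_smul {E : Type*}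
    [NormedAddCommGroup E] [NormedSpace ℝ E] [MeasurableSpace E] [BorelSpace E]
    [FiniteDimensional ℝ E] (μ : Measure E) [μ.IsAddHaarMeasure] {f : E → ℝ≥0∞}
    (hf : Measurable f) {r : ℝ} (hr : 0 < r) :
    ∫⁻ x, f x ∂μ = ENNReal.ofReal (r ^ Module.finrank ℝ E) * ∫⁻ x, f (r • x) ∂μ := by
  rw [← lintegral_map hf (measurable_const_smul r), Measure.map_addHaar_smul μ hr.ne',
    lintegral_smul_measure, abs_of_pos (by positivity), smul_eq_mul, ← mul_assoc,
    ← ENNReal.ofReal_mul (by positivity), mul_inv_cancel₀ (by positivity), ENNReal.ofReal_one,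
    one_mul]

theorem rpow_neg_one_div_pow {x : ℝ} (hx : 0 ≤ x) (k j : ℕ) :
    (x ^ (-1 / (k : ℝ))) ^ j = x ^ (-(j : ℝ) / k) := by
  rw [← Real.rpow_natCast, ← Real.rpow_mul hx]
  congr 1
  ring

namespace Schmidt

section Paraboloid

variable {n : ℕ}

/-- The squared Euclidean norm (the norm of `Fin n → ℝ` is the sup norm). -/
def sqNorm (v : Fin n → ℝ) : ℝ := ∑ j, v j ^ 2

theorem sq_le_sqNorm (v : Fin n → ℝ) (j : Fin n) : v j ^ 2 ≤ sqNorm v :=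
  Finset.single_le_sum (fun i _ => sq_nonneg (v i)) (Finset.mem_univ j)

theorem sqNorm_nonneg (v : Fin n → ℝ) : 0 ≤ sqNorm v :=
  Finset.sum_nonneg fun j _ => sq_nonneg (v j)

theorem sqNorm_smul (c : ℝ) (v : Fin n → ℝ) : sqNorm (c • v) = c ^ 2 * sqNorm v := by
  simp only [sqNorm, Finset.mul_sum, Pi.smul_apply, smul_eq_mul, mul_pow]

@[fun_prop]
theorem continuous_sqNorm : Continuous (sqNorm : (Fin n → ℝ) → ℝ) := by
  unfold sqNorm
  fun_prop

theorem sq_dist_le_sqNorm_sub (u p : Fin n → ℝ) : dist u p ^ 2 ≤ sqNorm (u - p) := by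
  have h : dist u p ≤ √(sqNorm (u - p)) := (dist_pi_le_iff (Real.sqrt_nonneg _)).2 fun j =>
    Real.abs_le_sqrt (sq_le_sqNorm (u - p) j)
  calc dist u p ^ 2 ≤ √(sqNorm (u - p)) ^ 2 := by gcongr
    _ = sqNorm (u - p) := Real.sq_sqrt (sqNorm_nonneg _)

theorem dist_lt_of_sqNorm_sub_lt {u p : Fin n → ℝ} {r : ℝ} (hr : 0 ≤ r)
    (h : sqNorm (u - p) < r ^ 2) : dist u p < r :=
  lt_of_pow_lt_pow_left₀ 2 hr ((sq_dist_le_sqNorm_sub u p).trans_lt h)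

/-- Small enough that the paraboloid stays above `3/4` on the whole cube. -/
noncomputable def paraboloidCoeff (n : ℕ) : ℝ := ((n : ℝ) + 1)⁻¹

theorem paraboloidCoeff_pos : 0 < paraboloidCoeff n := by
  unfold paraboloidCoeff
  positivity

theorem paraboloidCoeff_le_one : paraboloidCoeff n ≤ 1 :=
  inv_le_one_of_one_le₀ (by simp)

noncomputable def paraboloid (u : Fin n → ℝ) : ℝ :=
  1 - paraboloidCoeff n * sqNorm (u - fun _ => 1 / 2)

/-- The tangent hyperplane of `paraboloid` at `p`, lowered by `paraboloidCoeff n * r ^ 2`. -/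
noncomputable def loweredTangent (r : ℝ) (p u : Fin n → ℝ) : ℝ :=
  paraboloid p - 2 * paraboloidCoeff n * ∑ j, (p j - 1 / 2) * (u j - p j)
    - paraboloidCoeff n * r ^ 2

variable {r : ℝ} {p u : Fin n → ℝ}

theorem paraboloid_sub_loweredTangent :
    paraboloid u - loweredTangent r p u = paraboloidCoeff n * (r ^ 2 - sqNorm (u - p)) := by
  have h : sqNorm (u - fun _ => 1 / 2) = sqNorm (p - fun _ => 1 / 2)
      + 2 * ∑ j, (p j - 1 / 2) * (u j - p j) + sqNorm (u - p) := by
    simp only [sqNorm, Pi.sub_apply, Finset.mul_sum, ← Finset.sum_add_distrib]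
    exact Finset.sum_congr rfl fun j _ => by ring
  simp only [paraboloid, loweredTangent]
  linear_combination (-paraboloidCoeff n) * h

theorem loweredTangent_add_smul {a b : ℝ} (hab : a + b = 1) (u v : Fin n → ℝ) :
    loweredTangent r p (a • u + b • v) = a * loweredTangent r p u + b * loweredTangent r p v := by
  have h : ∑ j, (p j - 1 / 2) * ((a • u + b • v) j - p j)
      = a * ∑ j, (p j - 1 / 2) * (u j - p j) + b * ∑ j, (p j - 1 / 2) * (v j - p j) := by
    simp only [Finset.mul_sum, ← Finset.sum_add_distrib, Pi.add_apply, Pi.smul_apply, smul_eq_mul]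
    exact Finset.sum_congr rfl fun j _ => by linear_combination ((p j - 1 / 2) * p j) * hab
  simp only [loweredTangent, h]
  linear_combination (paraboloidCoeff n * r ^ 2 - paraboloid p) * hab

theorem concaveOn_loweredTangent (r : ℝ) (p : Fin n → ℝ) :
    ConcaveOn ℝ univ (loweredTangent r p) :=
  ⟨convex_univ, fun u _ v _ _ _ _ _ hab => (loweredTangent_add_smul hab u v).ge⟩

theorem concaveOn_paraboloid : ConcaveOn ℝ univ (paraboloid (n := n)) := by
  refine ⟨convex_univ, fun u _ v _ a b ha hb hab => ?_⟩
  set w := a • u + b • v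
  -- the paraboloid lies below its tangent hyperplane at `w` and touches it at `w`
  have hle : ∀ z, paraboloid z ≤ loweredTangent 0 w z := fun z => by
    have := paraboloid_sub_loweredTangent (r := 0) (p := w) (u := z)
    nlinarith [paraboloidCoeff_pos (n := n), sqNorm_nonneg (z - w)]
  have heq : loweredTangent 0 w w = paraboloid w := by
    have := paraboloid_sub_loweredTangent (r := 0) (p := w) (u := w)
    simp [sqNorm] at this
    linarith
  calc a • paraboloid u + b • paraboloid v
      ≤ a * loweredTangent 0 w u + b * loweredTangent 0 w v := by
        simp only [smul_eq_mul]
        gcongr <;> exact hle _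
    _ = paraboloid w := by rw [← loweredTangent_add_smul hab, heq]

theorem continuous_paraboloid : Continuous (paraboloid (n := n)) := by
  unfold paraboloid
  fun_prop

theorem continuous_loweredTangent (r : ℝ) (p : Fin n → ℝ) : Continuous (loweredTangent r p) := by
  unfold loweredTangent
  fun_prop

theorem sqNorm_sub_lt_of_loweredTangent_lt (h : loweredTangent r p u < paraboloid u) :
    sqNorm (u - p) < r ^ 2 := by
  have := paraboloid_sub_loweredTangent (r := r) (p := p) (u := u)
  nlinarith [paraboloidCoeff_pos (n := n)]

theorem paraboloid_le_loweredTangent (h : r ^ 2 ≤ sqNorm (u - p)) :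
    paraboloid u ≤ loweredTangent r p u := by
  have := paraboloid_sub_loweredTangent (r := r) (p := p) (u := u)
  nlinarith [paraboloidCoeff_pos (n := n)]

theorem paraboloid_le_one (u : Fin n → ℝ) : paraboloid u ≤ 1 := by
  have := sqNorm_nonneg (u - fun _ => 1 / 2)
  have := paraboloidCoeff_pos (n := n)
  unfold paraboloid
  nlinarith

theorem three_quarters_le_paraboloid (hu : u ∈ unitCube n) : 3 / 4 ≤ paraboloid u := by
  have hsq : sqNorm (u - fun _ => 1 / 2) ≤ n / 4 :=
    calc sqNorm (u - fun _ => 1 / 2) ≤ ∑ _j : Fin n, (1 / 4 : ℝ) :=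
          Finset.sum_le_sum fun j _ => by
            have := hu j (mem_univ j)
            simp only [Pi.sub_apply]
            nlinarith [this.1, this.2]
      _ = n / 4 := by simp; ring
  have : paraboloidCoeff n * n ≤ 1 := by
    rw [paraboloidCoeff, inv_mul_le_one₀ (by positivity)]
    linarith
  unfold paraboloid
  nlinarith [paraboloidCoeff_pos (n := n)]

end Paraboloid

section Body

variable {n : ℕ}

noncomputable def paraboloidBody (n : ℕ) : Set (Fin (n + 1) → ℝ) :=
  unitCube (n + 1) ∩ {y | y 0 < paraboloid (Fin.tail y)}

noncomputable def belowTangent (r : ℝ) (p : Fin n → ℝ) : Set (Fin (n + 1) → ℝ) :=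
  {y | y 0 ≤ loweredTangent r p (Fin.tail y)}

theorem convex_paraboloidBody : Convex ℝ (paraboloidBody n) :=
  (convex_unitCube _).inter concaveOn_paraboloid.convex_setOf_head_lt

theorem convex_belowTangent (r : ℝ) (p : Fin n → ℝ) : Convex ℝ (belowTangent r p) :=
  (concaveOn_loweredTangent r p).convex_setOf_head_le

theorem measurableSet_paraboloidBody : MeasurableSet (paraboloidBody n) :=
  (MeasurableSet.univ_pi fun _ => measurableSet_Icc).inter
    (measurableSet_lt (by fun_prop) (continuous_paraboloid.measurable.comp (by fun_prop)))

theorem measurableSet_belowTangent (r : ℝ) (p : Fin n → ℝ) : MeasurableSet (belowTangent r p) :=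
  measurableSet_le (by fun_prop) ((continuous_loweredTangent r p).measurable.comp (by fun_prop))

theorem volume_paraboloidBody_ne_top : volume (paraboloidBody n) ≠ ∞ :=
  ne_top_of_le_ne_top (isCompact_univ_pi fun _ => isCompact_Icc).measure_lt_top.ne
    (measure_mono inter_subset_left)

variable {r : ℝ} {p q : Fin n → ℝ}

theorem sqNorm_sub_lt_of_mem_paraboloidBody_diff {y : Fin (n + 1) → ℝ}
    (hy : y ∈ paraboloidBody n \ belowTangent r p) : sqNorm (Fin.tail y - p) < r ^ 2 :=
  sqNorm_sub_lt_of_loweredTangent_lt ((not_le.1 hy.2).trans hy.1.2)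

theorem paraboloidBody_diff_belowTangent_subset (hr : 0 ≤ r) (hpq : 2 * r ≤ dist p q) :
    paraboloidBody n \ belowTangent r p ⊆ belowTangent r q := by
  intro y hy
  have hyp := dist_lt_of_sqNorm_sub_lt hr (sqNorm_sub_lt_of_mem_paraboloidBody_diff hy)
  have hyq : r ≤ dist (Fin.tail y) q := by linarith [dist_triangle_left p q (Fin.tail y)]
  have hsq : r ^ 2 ≤ sqNorm (Fin.tail y - q) :=
    (pow_le_pow_left₀ hr hyq 2).trans (sq_dist_le_sqNorm_sub _ _)
  exact hy.1.2.le.trans (paraboloid_le_loweredTangent hsq)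

theorem paraboloidBody_diff_belowTangent (hp : ∀ j, p j ∈ Icc (1 / 4 : ℝ) (3 / 4)) (hr0 : 0 ≤ r)
    (hr : r ≤ 1 / 8) : paraboloidBody n \ belowTangent r p
      = {y : Fin (n + 1) → ℝ |
          y 0 ∈ Ioo (loweredTangent r p (Fin.tail y)) (paraboloid (Fin.tail y))} := by
  ext y
  refine ⟨fun hy => ⟨not_le.1 hy.2, hy.1.2⟩, fun hy => ⟨⟨?_, hy.2⟩, not_le.2 hy.1⟩⟩
  have hdist := dist_lt_of_sqNorm_sub_lt hr0 (sqNorm_sub_lt_of_loweredTangent_lt (hy.1.trans hy.2))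
  have htail : Fin.tail y ∈ unitCube n := fun j _ => by
    have h1 := abs_lt.1 (((dist_le_pi_dist (Fin.tail y) p j).trans_lt hdist).trans_eq'
      (Real.dist_eq _ _).symm)
    have h2 := hp j
    constructor <;> linarith [h1.1, h1.2, h2.1, h2.2]
  have hT : 0 ≤ loweredTangent r p (Fin.tail y) := by
    have := paraboloid_sub_loweredTangent (r := r) (p := p) (u := Fin.tail y)
    nlinarith [three_quarters_le_paraboloid htail, paraboloidCoeff_le_one (n := n),
      paraboloidCoeff_pos (n := n), sqNorm_nonneg (Fin.tail y - p)]
  refine mem_univ_pi.2 <| Fin.forall_fin_succ.2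
    ⟨⟨by linarith [hy.1], ?_⟩, fun j => htail j (mem_univ j)⟩
  linarith [hy.2, paraboloid_le_one (Fin.tail y)]

end Body

section CapVolume

variable {n : ℕ}

noncomputable def capVolumeConstant (n : ℕ) : ℝ :=
  (∫⁻ u : Fin n → ℝ, ENNReal.ofReal (paraboloidCoeff n * (1 - sqNorm u))).toReal

theorem lintegral_ofReal_mul_sq_sub_sqNorm {r : ℝ} (hr : 0 < r) :
    ∫⁻ u : Fin n → ℝ, ENNReal.ofReal (paraboloidCoeff n * (r ^ 2 - sqNorm u))
      = ENNReal.ofReal (r ^ (n + 2))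
        * ∫⁻ u : Fin n → ℝ, ENNReal.ofReal (paraboloidCoeff n * (1 - sqNorm u)) := by
  have hscale : ∀ u : Fin n → ℝ, ENNReal.ofReal (paraboloidCoeff n * (r ^ 2 - sqNorm (r • u)))
      = ENNReal.ofReal (r ^ 2) * ENNReal.ofReal (paraboloidCoeff n * (1 - sqNorm u)) := fun u => by
    rw [sqNorm_smul, ← ENNReal.ofReal_mul (by positivity)]
    ring_nf
  rw [lintegral_eq_ofReal_pow_finrank_mul_lintegral_comp_smul volume (by fun_prop) hr,
    Module.finrank_fin_fun]
  simp_rw [hscale]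
  rw [lintegral_const_mul' _ _ ENNReal.ofReal_ne_top, ← mul_assoc,
    ← ENNReal.ofReal_mul (by positivity), pow_add]

theorem lintegral_ofReal_one_sub_sqNorm_pos :
    0 < ∫⁻ u : Fin n → ℝ, ENNReal.ofReal (paraboloidCoeff n * (1 - sqNorm u)) := by
  have hc : Continuous fun u : Fin n → ℝ => ENNReal.ofReal (paraboloidCoeff n * (1 - sqNorm u)) :=
    ENNReal.continuous_ofReal.comp (by fun_prop)
  rw [lintegral_pos_iff_support hc.measurable]
  exact hc.isOpen_support.measure_pos volume ⟨0, by simp [sqNorm, paraboloidCoeff_pos]⟩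

theorem lintegral_ofReal_one_sub_sqNorm_lt_top :
    ∫⁻ u : Fin n → ℝ, ENNReal.ofReal (paraboloidCoeff n * (1 - sqNorm u)) < ∞ := by
  have hle : ∀ u : Fin n → ℝ, ENNReal.ofReal (paraboloidCoeff n * (1 - sqNorm u))
      ≤ (Metric.closedBall 0 1).indicator (fun _ => ENNReal.ofReal (paraboloidCoeff n)) u := by
    intro u
    by_cases hu : u ∈ Metric.closedBall 0 1
    · rw [indicator_of_mem hu]
      exact ENNReal.ofReal_le_ofReal
        (by nlinarith [sqNorm_nonneg u, paraboloidCoeff_pos (n := n)])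
    · rw [indicator_of_notMem hu, nonpos_iff_eq_zero, ENNReal.ofReal_eq_zero]
      have h1 : 1 < dist u 0 := not_le.1 hu
      have h2 : 1 < sqNorm u := by
        simpa using (one_lt_pow₀ h1 two_ne_zero).trans_le (sq_dist_le_sqNorm_sub u 0)
      exact mul_nonpos_of_nonneg_of_nonpos paraboloidCoeff_pos.le (by linarith)
  calc _ ≤ ∫⁻ u, (Metric.closedBall (0 : Fin n → ℝ) 1).indicator
          (fun _ => ENNReal.ofReal (paraboloidCoeff n)) u := lintegral_mono hle
    _ = ENNReal.ofReal (paraboloidCoeff n) * volume (Metric.closedBall (0 : Fin n → ℝ) 1) :=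
        lintegral_indicator_const Metric.isClosed_closedBall.measurableSet _
    _ < ∞ := ENNReal.mul_lt_top ENNReal.ofReal_lt_top measure_closedBall_lt_top

theorem capVolumeConstant_pos : 0 < capVolumeConstant n :=
  ENNReal.toReal_pos lintegral_ofReal_one_sub_sqNorm_pos.ne'
    lintegral_ofReal_one_sub_sqNorm_lt_top.ne

theorem measureReal_paraboloidBody_diff_belowTangent {r : ℝ} {p : Fin n → ℝ}
    (hp : ∀ j, p j ∈ Icc (1 / 4 : ℝ) (3 / 4)) (hr0 : 0 < r) (hr : r ≤ 1 / 8) :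
    volume.real (paraboloidBody n \ belowTangent r p) = r ^ (n + 2) * capVolumeConstant n := by
  rw [measureReal_def, paraboloidBody_diff_belowTangent hp hr0.le hr,
    volume_setOf_head_mem_Ioo (continuous_loweredTangent r p).measurable
      continuous_paraboloid.measurable]
  simp_rw [paraboloid_sub_loweredTangent]
  rw [lintegral_sub_right_eq_self
      (fun v => ENNReal.ofReal (paraboloidCoeff n * (r ^ 2 - sqNorm v))) p,
    lintegral_ofReal_mul_sq_sub_sqNorm hr0, ENNReal.toReal_mul,
    ENNReal.toReal_ofReal (by positivity), capVolumeConstant]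

end CapVolume

section Grid

variable {n m : ℕ} {r : ℝ}

noncomputable def gridPoint (r : ℝ) (k : Fin n → Fin m) : Fin n → ℝ :=
  fun j => 1 / 4 + r + 2 * r * (k j : ℕ)

theorem gridPoint_mem_Icc (hr : 0 ≤ r) (hm : 4 * r * m ≤ 1) (k : Fin n → Fin m) (j : Fin n) :
    gridPoint r k j ∈ Icc (1 / 4 : ℝ) (3 / 4) := by
  have hk : ((k j : ℕ) : ℝ) + 1 ≤ m := by exact_mod_cast (k j).isLt
  have : 0 ≤ 2 * r * ((k j : ℕ) : ℝ) := by positivity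
  constructor <;> simp only [gridPoint] <;> nlinarith

theorem two_mul_le_dist_gridPoint (hr : 0 ≤ r) {k k' : Fin n → Fin m} (hk : k ≠ k') :
    2 * r ≤ dist (gridPoint r k) (gridPoint r k') := by
  obtain ⟨j, hj⟩ := Function.ne_iff.1 hk
  have h1 : (1 : ℝ) ≤ |((k j : ℕ) : ℝ) - (k' j : ℕ)| := by
    have : ((k j : ℕ) : ℤ) - (k' j : ℕ) ≠ 0 :=
      sub_ne_zero.2 (by exact_mod_cast Fin.val_ne_of_ne hj)
    exact_mod_cast Int.one_le_abs this
  calc 2 * r ≤ |2 * r| * |((k j : ℕ) : ℝ) - (k' j : ℕ)| := by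
        rw [abs_of_nonneg (by positivity)]
        exact le_mul_of_one_le_right (by positivity) h1
    _ = dist (gridPoint r k j) (gridPoint r k' j) := by
        rw [Real.dist_eq, ← abs_mul]
        simp only [gridPoint]
        ring_nf
    _ ≤ _ := dist_le_pi_dist _ _ j

end Grid

theorem exists_convex_subset_unitCube_abs_localDiscrepancy_ge {n N : ℕ} {r : ℝ} (hr0 : 0 < r)
    (hr : r ≤ 1 / 8) (hsmall : 2 * N * (r ^ (n + 2) * capVolumeConstant n) ≤ 1)
    (x : Fin N → Fin (n + 1) → ℝ) :
    ∃ J : Set (Fin (n + 1) → ℝ), Convex ℝ J ∧ J ⊆ unitCube (n + 1) ∧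
      (⌊1 / (4 * r)⌋₊ : ℝ) ^ n * (N * (r ^ (n + 2) * capVolumeConstant n)) / 2
        ≤ |localDiscrepancy volume x J| := by
  set m := ⌊1 / (4 * r)⌋₊
  have hm : 4 * r * m ≤ 1 := by
    have := Nat.floor_le (by positivity : 0 ≤ 1 / (4 * r))
    rwa [le_div_iff₀ (by positivity), mul_comm] at this
  have hcap : ∀ k : Fin n → Fin m, volume.real (paraboloidBody n \ belowTangent r (gridPoint r k))
      = r ^ (n + 2) * capVolumeConstant n := fun k =>
    measureReal_paraboloidBody_diff_belowTangent (gridPoint_mem_Icc hr0.le hm k) hr0 hr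
  obtain ⟨S, hS⟩ := exists_abs_localDiscrepancy_inter_iInter_ge x measurableSet_paraboloidBody
    (fun k => measurableSet_belowTangent r (gridPoint r k)) volume_paraboloidBody_ne_top
    (fun k k' hk => paraboloidBody_diff_belowTangent_subset hr0.le
      (two_mul_le_dist_gridPoint hr0.le hk))
    (fun k => by rwa [hcap])
  refine ⟨_, convex_paraboloidBody.inter (convex_iInter₂ fun k _ => convex_belowTangent r _),
    inter_subset_left.trans inter_subset_left, le_of_eq_of_le ?_ hS⟩
  simp only [hcap, Finset.sum_const, Finset.card_univ, Fintype.card_fun, Fintype.card_fin,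
    nsmul_eq_mul]
  push_cast
  ring

theorem sq_div_eight_pow_le_floor_pow_mul {r : ℝ} (hr0 : 0 < r) (hr : r ≤ 1 / 8) (n : ℕ) :
    r ^ 2 / 8 ^ n ≤ (⌊1 / (4 * r)⌋₊ : ℝ) ^ n * r ^ (n + 2) := by
  have hfloor : 1 / (8 * r) ≤ ⌊1 / (4 * r)⌋₊ := by
    have h1 := Nat.lt_floor_add_one (1 / (4 * r))
    have h2 : 1 ≤ 1 / (8 * r) := by
      rw [le_div_iff₀ (by positivity)]
      linarith
    have h3 : 1 / (4 * r) = 2 * (1 / (8 * r)) := by field_simp; ring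
    linarith
  calc r ^ 2 / 8 ^ n = (1 / (8 * r)) ^ n * r ^ (n + 2) := by
        rw [pow_add, div_pow, one_pow, mul_pow]
        field_simp
    _ ≤ _ := by gcongr

theorem exists_cap_radius (n : ℕ) {γ : ℝ} (hγ : 0 < γ) :
    ∃ c > 0, ∀ N : ℕ, 0 < N → ∃ r : ℝ, 0 < r ∧ r ≤ 1 / 8 ∧ 2 * N * (r ^ (n + 2) * γ) ≤ 1 ∧
      c * (N : ℝ) ^ (-2 / ((n : ℝ) + 2)) ≤ r ^ 2 := by
  set c₀ := min (1 / 8) ((2 * γ) ^ (-1 / ((n + 2 : ℕ) : ℝ)))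
  have hc₀ : 0 < c₀ := lt_min (by norm_num) (by positivity)
  refine ⟨c₀ ^ 2, by positivity, fun N hN => ?_⟩
  have hN : (1 : ℝ) ≤ N := by exact_mod_cast hN
  set t := (N : ℝ) ^ (-1 / ((n + 2 : ℕ) : ℝ))
  have ht1 : t ≤ 1 := Real.rpow_le_one_of_one_le_of_nonpos hN (by rw [neg_div]; simp; positivity)
  refine ⟨c₀ * t, by positivity, ?_, ?_, ?_⟩
  · nlinarith [min_le_left (1 / 8 : ℝ) ((2 * γ) ^ (-1 / ((n + 2 : ℕ) : ℝ)))]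
  · have hc : c₀ ^ (n + 2) ≤ (2 * γ)⁻¹ :=
      calc c₀ ^ (n + 2) ≤ ((2 * γ) ^ (-1 / ((n + 2 : ℕ) : ℝ))) ^ (n + 2) := by
            gcongr
            exact min_le_right _ _
        _ = (2 * γ)⁻¹ := by
            rw [rpow_neg_one_div_pow (by positivity), neg_div, div_self (by positivity),
              Real.rpow_neg_one]
    have ht : t ^ (n + 2) = (N : ℝ)⁻¹ := by
      rw [rpow_neg_one_div_pow (by positivity), neg_div, div_self (by positivity),
        Real.rpow_neg_one]
    rw [mul_pow, ht]
    calc 2 * N * (c₀ ^ (n + 2) * (N : ℝ)⁻¹ * γ) = 2 * γ * c₀ ^ (n + 2) := by field_simp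
      _ ≤ 2 * γ * (2 * γ)⁻¹ := by gcongr
      _ = 1 := by field_simp
  · rw [mul_pow, rpow_neg_one_div_pow (by positivity)]
    push_cast
    rfl

end Schmidt

theorem isotropic_discrepancy_lower_bound (s : ℕ) (hs : 2 ≤ s) :
    ∃ c : ℝ, 0 < c ∧ ∀ N : ℕ, 0 < N → ∀ x : Fin N → (Fin s → ℝ), (∀ n, x n ∈ unitCube s) →
      ∃ J : Set (Fin s → ℝ), Convex ℝ J ∧ J ⊆ unitCube s ∧
        c * (N : ℝ) ^ (-(2 : ℝ) / ((s : ℝ) + 1))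
          ≤ |(1 / (N : ℝ)) * ∑ n, Set.indicator J (fun _ => (1 : ℝ)) (x n)
              - (volume J).toReal| := by
  obtain ⟨n, rfl⟩ : ∃ n, s = n + 1 := ⟨s - 1, by omega⟩
  set γ := Schmidt.capVolumeConstant n
  have hγ : 0 < γ := Schmidt.capVolumeConstant_pos
  obtain ⟨c, hc, hradius⟩ := Schmidt.exists_cap_radius n hγ
  refine ⟨c * γ / (2 * 8 ^ n), by positivity, fun N hN x _ => ?_⟩
  obtain ⟨r, hr0, hr, hsmall, hcr⟩ := hradius N hN
  obtain ⟨J, hJ, hJcube, hJdisc⟩ :=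
    Schmidt.exists_convex_subset_unitCube_abs_localDiscrepancy_ge hr0 hr hsmall x
  refine ⟨J, hJ, hJcube, ?_⟩
  have hexp : -(2 : ℝ) / (((n + 1 : ℕ) : ℝ) + 1) = -2 / ((n : ℝ) + 2) := by push_cast; ring
  rw [abs_one_div_mul_sum_indicator_sub x hN, hexp, le_div_iff₀ (by exact_mod_cast hN)]
  have hNγ : 0 ≤ (N : ℝ) * γ := by positivity
  calc c * γ / (2 * 8 ^ n) * (N : ℝ) ^ (-2 / ((n : ℝ) + 2)) * N
      = c * (N : ℝ) ^ (-2 / ((n : ℝ) + 2)) / 8 ^ n * (N * γ) / 2 := by ring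
    _ ≤ r ^ 2 / 8 ^ n * (N * γ) / 2 := by gcongr
    _ ≤ (⌊1 / (4 * r)⌋₊ : ℝ) ^ n * r ^ (n + 2) * (N * γ) / 2 := by
        gcongr
        exact Schmidt.sq_div_eight_pow_le_floor_pow_mul hr0 hr n
    _ = (⌊1 / (4 * r)⌋₊ : ℝ) ^ n * (N * (r ^ (n + 2) * γ)) / 2 := by ring
    _ ≤ _ := hJdisc
end
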